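/- Let $w=\log\rho$ with $\rho(x,y)=(x^4+4y^2)^{1/4}$ on the Grushin plane. Then at every point with $\rho\neq 0$, the symmetrized horizontal Hessian $(D^2_{\mathcal{X}}w)^*$ (a $2\times 2$ symmetric matrix) has trace $\mathrm{Tr}((D^2_{\mathcal{X}}w)^*) = x^2/\rho^4$ and determinant $\det((D^2_{\mathcal{X}}w)^*) = -(2x^4+y^2)/\rho^8$; consequently its eigenvalues are $\frac{x^2\pm\sqrt{9x^4+4y^2}}{2\rho^4}$, one nonnegative and one nonpositive. -/

import Mathlib

noncomputable section

/-- Grushin homogeneous norm `ρ(x,y) = (x⁴ + 4y²)^{1/4}` on the plane. -/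
def rhoG (x y : ℝ) : ℝ := (x ^ 4 + 4 * y ^ 2) ^ (1/4 : ℝ)

/-- Derivative along the Grushin field `X = ∂ₓ`. -/
def GX (u : ℝ → ℝ → ℝ) (x y : ℝ) : ℝ := deriv (fun s => u s y) x

/-- Derivative along the Grushin field `Y = x ∂_y`. -/
def GY (u : ℝ → ℝ → ℝ) (x y : ℝ) : ℝ := x * deriv (fun s => u x s) y

/-- Symmetrized horizontal Hessian `((D²_𝒳u)*)ᵢⱼ = (ZᵢZⱼu + ZⱼZᵢu)/2`, `Z₁=X`, `Z₂=Y`. -/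
def HessG (u : ℝ → ℝ → ℝ) (x y : ℝ) : Matrix (Fin 2) (Fin 2) ℝ :=
  !![GX (GX u) x y, (GX (GY u) x y + GY (GX u) x y) / 2;
     (GX (GY u) x y + GY (GX u) x y) / 2, GY (GY u) x y]

/-- `w = log ρ` on the Grushin plane. -/
def wG (x y : ℝ) : ℝ := Real.log (rhoG x y)

/-!
With `q = x⁴ + 4y² = ρ⁴` we have `w = (log q)/4`, so `Xw = x³/q` and `Yw = 2xy/q`;
differentiating once more gives the Hessian entries as rational functions over `q²`, whose trace
and determinant are direct computations. A `2 × 2` matrix with trace `t` and determinant `D` has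
eigenvalues `(t ± √(t² - 4D))/2`, and here `q²(t² - 4D) = 9x⁴ + 4y²`. Since
`√(9x⁴ + 4y²) ≥ x²`, the two eigenvalues have opposite signs.
-/

open Real Filter Topology Matrix

namespace Matrix

theorem exists_mulVec_eq_smul_of_sq_sub_trace_mul_add_det {R : Type*} [CommRing R] [IsDomain R]
    (A : Matrix (Fin 2) (Fin 2) R) {μ : R} (hμ : μ ^ 2 - A.trace * μ + A.det = 0) :
    ∃ u, u ≠ 0 ∧ A *ᵥ u = μ • u := by
  have hdet : (A - μ • 1).det = 0 := by
    rw [det_fin_two, ← hμ, trace_fin_two, det_fin_two]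
    simp only [sub_apply, smul_apply, one_apply_eq, one_apply_ne zero_ne_one,
      one_apply_ne one_ne_zero, smul_eq_mul]
    ring
  obtain ⟨u, hu, hAu⟩ := exists_mulVec_eq_zero_iff.mpr hdet
  refine ⟨u, hu, ?_⟩
  rwa [sub_mulVec, smul_mulVec, one_mulVec, sub_eq_zero] at hAu

theorem exists_eigenvectors_fin_two {K : Type*} [Field K] [NeZero (2 : K)]
    (A : Matrix (Fin 2) (Fin 2) K) {s : K} (hs : s ^ 2 = A.trace ^ 2 - 4 * A.det) :
    (∃ u, u ≠ 0 ∧ A *ᵥ u = ((A.trace + s) / 2) • u) ∧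
      ∃ u, u ≠ 0 ∧ A *ᵥ u = ((A.trace - s) / 2) • u := by
  constructor <;> apply exists_mulVec_eq_smul_of_sq_sub_trace_mul_add_det <;>
    field_simp <;> linear_combination hs

end Matrix

theorem rhoG_pow_four (x y : ℝ) : rhoG x y ^ 4 = x ^ 4 + 4 * y ^ 2 := by
  rw [rhoG, ← rpow_natCast, ← rpow_mul (by positivity)]
  norm_num

theorem wG_eq_log_div_four (x y : ℝ) : wG x y = log (x ^ 4 + 4 * y ^ 2) / 4 := by
  rw [wG, ← rhoG_pow_four, log_pow]
  ring

theorem hasDerivAt_quartic_fst (x y : ℝ) :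
    HasDerivAt (fun s => s ^ 4 + 4 * y ^ 2) (4 * x ^ 3) x := by
  simpa using (hasDerivAt_pow 4 x).add_const (4 * y ^ 2)

theorem hasDerivAt_quartic_snd (x y : ℝ) :
    HasDerivAt (fun s => x ^ 4 + 4 * s ^ 2) (8 * y) y := by
  simpa using (((hasDerivAt_pow 2 y).const_mul 4).const_add (x ^ 4)).congr_deriv (by ring)

theorem eventually_quartic_pos_fst {x y : ℝ} (hq : 0 < x ^ 4 + 4 * y ^ 2) :
    ∀ᶠ s in 𝓝 x, 0 < s ^ 4 + 4 * y ^ 2 :=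
  (by fun_prop : Continuous fun s : ℝ => s ^ 4 + 4 * y ^ 2).continuousAt.eventually_const_lt hq

theorem eventually_quartic_pos_snd {x y : ℝ} (hq : 0 < x ^ 4 + 4 * y ^ 2) :
    ∀ᶠ s in 𝓝 y, 0 < x ^ 4 + 4 * s ^ 2 :=
  (by fun_prop : Continuous fun s : ℝ => x ^ 4 + 4 * s ^ 2).continuousAt.eventually_const_lt hq

theorem GX_congr {u v : ℝ → ℝ → ℝ} {x y : ℝ} (h : (u · y) =ᶠ[𝓝 x] (v · y)) :
    GX u x y = GX v x y :=
  h.deriv_eq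

theorem GY_congr {u v : ℝ → ℝ → ℝ} {x y : ℝ} (h : (u x ·) =ᶠ[𝓝 y] (v x ·)) :
    GY u x y = GY v x y := by
  rw [GY, GY, h.deriv_eq]

section Derivatives

variable {x y : ℝ}

theorem GX_wG (hq : 0 < x ^ 4 + 4 * y ^ 2) : GX wG x y = x ^ 3 / (x ^ 4 + 4 * y ^ 2) := by
  rw [GX, funext fun s => wG_eq_log_div_four s y,
    (((hasDerivAt_quartic_fst x y).log hq.ne').div_const 4).deriv]
  field_simp

theorem GY_wG (hq : 0 < x ^ 4 + 4 * y ^ 2) : GY wG x y = 2 * x * y / (x ^ 4 + 4 * y ^ 2) := by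
  rw [GY, funext fun s => wG_eq_log_div_four x s,
    (((hasDerivAt_quartic_snd x y).log hq.ne').div_const 4).deriv]
  field_simp
  ring

theorem GX_GX_wG (hq : 0 < x ^ 4 + 4 * y ^ 2) :
    GX (GX wG) x y = 3 * x ^ 2 / (x ^ 4 + 4 * y ^ 2) - 4 * x ^ 6 / (x ^ 4 + 4 * y ^ 2) ^ 2 := by
  have hd : HasDerivAt (fun s => s ^ 3 / (s ^ 4 + 4 * y ^ 2)) _ x :=
    (hasDerivAt_pow 3 x).div (hasDerivAt_quartic_fst x y) hq.ne'
  rw [GX_congr (v := fun s y => s ^ 3 / (s ^ 4 + 4 * y ^ 2))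
    ((eventually_quartic_pos_fst hq).mono fun s hs => GX_wG hs), GX, hd.deriv]
  field_simp
  ring

theorem GX_GY_wG (hq : 0 < x ^ 4 + 4 * y ^ 2) :
    GX (GY wG) x y = 2 * y / (x ^ 4 + 4 * y ^ 2) - 8 * x ^ 4 * y / (x ^ 4 + 4 * y ^ 2) ^ 2 := by
  have hd : HasDerivAt (fun s => 2 * s * y / (s ^ 4 + 4 * y ^ 2)) _ x :=
    (((hasDerivAt_id' x).const_mul 2).mul_const y).div (hasDerivAt_quartic_fst x y) hq.ne'
  rw [GX_congr (v := fun s y => 2 * s * y / (s ^ 4 + 4 * y ^ 2))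
    ((eventually_quartic_pos_fst hq).mono fun s hs => GY_wG hs), GX, hd.deriv]
  field_simp
  ring

theorem GY_GX_wG (hq : 0 < x ^ 4 + 4 * y ^ 2) :
    GY (GX wG) x y = -(8 * x ^ 4 * y) / (x ^ 4 + 4 * y ^ 2) ^ 2 := by
  have hd : HasDerivAt (fun s => x ^ 3 / (x ^ 4 + 4 * s ^ 2)) _ y :=
    (hasDerivAt_const y (x ^ 3)).div (hasDerivAt_quartic_snd x y) hq.ne'
  rw [GY_congr (v := fun x s => x ^ 3 / (x ^ 4 + 4 * s ^ 2))
    ((eventually_quartic_pos_snd hq).mono fun s hs => GX_wG hs), GY, hd.deriv]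
  field_simp
  ring

theorem GY_GY_wG (hq : 0 < x ^ 4 + 4 * y ^ 2) :
    GY (GY wG) x y =
      2 * x ^ 2 / (x ^ 4 + 4 * y ^ 2) - 16 * x ^ 2 * y ^ 2 / (x ^ 4 + 4 * y ^ 2) ^ 2 := by
  have hd : HasDerivAt (fun s => 2 * x * s / (x ^ 4 + 4 * s ^ 2)) _ y :=
    ((hasDerivAt_id' y).const_mul (2 * x)).div (hasDerivAt_quartic_snd x y) hq.ne'
  rw [GY_congr (v := fun x s => 2 * x * s / (x ^ 4 + 4 * s ^ 2))
    ((eventually_quartic_pos_snd hq).mono fun s hs => GY_wG hs), GY, hd.deriv]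
  field_simp
  ring

theorem HessG_wG (hq : 0 < x ^ 4 + 4 * y ^ 2) : HessG wG x y =
    !![3 * x ^ 2 / (x ^ 4 + 4 * y ^ 2) - 4 * x ^ 6 / (x ^ 4 + 4 * y ^ 2) ^ 2,
      y / (x ^ 4 + 4 * y ^ 2) - 8 * x ^ 4 * y / (x ^ 4 + 4 * y ^ 2) ^ 2;
      y / (x ^ 4 + 4 * y ^ 2) - 8 * x ^ 4 * y / (x ^ 4 + 4 * y ^ 2) ^ 2,
      2 * x ^ 2 / (x ^ 4 + 4 * y ^ 2) - 16 * x ^ 2 * y ^ 2 / (x ^ 4 + 4 * y ^ 2) ^ 2] := by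
  have hoff : (GX (GY wG) x y + GY (GX wG) x y) / 2 =
      y / (x ^ 4 + 4 * y ^ 2) - 8 * x ^ 4 * y / (x ^ 4 + 4 * y ^ 2) ^ 2 := by
    rw [GX_GY_wG hq, GY_GX_wG hq]
    ring
  rw [HessG, GX_GX_wG hq, GY_GY_wG hq, hoff]

theorem trace_HessG_wG (hq : 0 < x ^ 4 + 4 * y ^ 2) :
    (HessG wG x y).trace = x ^ 2 / (x ^ 4 + 4 * y ^ 2) := by
  rw [HessG_wG hq, trace_fin_two_of]
  field_simp
  ring

theorem det_HessG_wG (hq : 0 < x ^ 4 + 4 * y ^ 2) :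
    (HessG wG x y).det = -(2 * x ^ 4 + y ^ 2) / (x ^ 4 + 4 * y ^ 2) ^ 2 := by
  rw [HessG_wG hq, det_fin_two_of]
  field_simp
  ring

end Derivatives

theorem sq_le_sqrt_nine_mul_pow_four_add (x y : ℝ) : x ^ 2 ≤ √(9 * x ^ 4 + 4 * y ^ 2) :=
  (le_sqrt (by positivity) (by positivity)).mpr (by nlinarith [sq_nonneg x, sq_nonneg y])

/-- at every point with `ρ ≠ 0`, the symmetrized horizontal Hessian of
`w = log ρ` has trace `x²/ρ⁴` and determinant `-(2x⁴+y²)/ρ⁸`; consequently its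
eigenvalues are `(x² ± √(9x⁴+4y²))/(2ρ⁴)`, one nonnegative and one nonpositive. -/
theorem stmt9 (x y : ℝ) (hρ : rhoG x y ≠ 0) :
    Matrix.trace (HessG wG x y) = x ^ 2 / rhoG x y ^ 4 ∧
    Matrix.det (HessG wG x y) = -(2 * x ^ 4 + y ^ 2) / rhoG x y ^ 8 ∧
    (∃ u : Fin 2 → ℝ, u ≠ 0 ∧ (HessG wG x y).mulVec u =
      ((x ^ 2 + Real.sqrt (9 * x ^ 4 + 4 * y ^ 2)) / (2 * rhoG x y ^ 4)) • u) ∧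
    (∃ u : Fin 2 → ℝ, u ≠ 0 ∧ (HessG wG x y).mulVec u =
      ((x ^ 2 - Real.sqrt (9 * x ^ 4 + 4 * y ^ 2)) / (2 * rhoG x y ^ 4)) • u) ∧
    0 ≤ (x ^ 2 + Real.sqrt (9 * x ^ 4 + 4 * y ^ 2)) / (2 * rhoG x y ^ 4) ∧
    (x ^ 2 - Real.sqrt (9 * x ^ 4 + 4 * y ^ 2)) / (2 * rhoG x y ^ 4) ≤ 0 := by
  have hq : 0 < x ^ 4 + 4 * y ^ 2 :=
    lt_of_le_of_ne (by positivity) (rhoG_pow_four x y ▸ pow_ne_zero 4 hρ).symm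
  have hρ8 : rhoG x y ^ 8 = (x ^ 4 + 4 * y ^ 2) ^ 2 := by rw [← rhoG_pow_four]; ring
  have htr := trace_HessG_wG hq
  have hdet := det_HessG_wG hq
  set S := √(9 * x ^ 4 + 4 * y ^ 2)
  have hdisc : (S / (x ^ 4 + 4 * y ^ 2)) ^ 2 =
      (HessG wG x y).trace ^ 2 - 4 * (HessG wG x y).det := by
    rw [htr, hdet, div_pow, sq_sqrt (by positivity)]
    field_simp
    ring
  obtain ⟨hplus, hminus⟩ := (HessG wG x y).exists_eigenvectors_fin_two hdisc
  rw [htr, ← add_div] at hplus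
  rw [htr, ← sub_div] at hminus
  have hS : x ^ 2 ≤ S := sq_le_sqrt_nine_mul_pow_four_add x y
  rw [hρ8, rhoG_pow_four]
  simp only [div_mul_eq_div_div_swap]
  refine ⟨htr, hdet, hplus, hminus, by positivity, ?_⟩
  exact div_nonpos_of_nonpos_of_nonneg (div_nonpos_of_nonpos_of_nonneg (by linarith) hq.le)
    zero_le_two
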